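/- arXiv:2508.02321 — 2 statements merged into one kernel-verified Lean document; each statement's English description precedes it below -/
import Mathlib

section
/- The polynomial p(Y) = 1601361472000000·Y^5 + 6760062816990000·Y^4 − 6284181440066400·Y^3 + 3572696139179193·Y^2 − 7126051666209372·Y + 2258133778849572 satisfies: p(−Y) has exactly one sign change in its coefficient sequence, hence p has at most one negative real root, and p(0) > 0 together with p(Y) → −∞ as Y → −∞ shows p has at least one negative real root. -/
/-- p(Y) for the Huan–Yang example. -/
noncomputable def pHY (Y : ℝ) : ℝ :=
  1601361472000000 * Y ^ 5 + 6760062816990000 * Y ^ 4 - 6284181440066400 * Y ^ 3 +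
    3572696139179193 * Y ^ 2 - 7126051666209372 * Y + 2258133778849572

lemma pHY_key : ∀ u v : ℝ, 0 < v → v < u → pHY (-u) = 0 → pHY (-v) = 0 → False := by
  intro u v hv hvu e1 e2
  have hu : 0 < u := hv.trans hvu
  have E : (pHY (-u)) * v ^ 5 - (pHY (-v)) * u ^ 5 = 0 := by rw [e1, e2]; ring
  have p2 : v ^ 2 < u ^ 2 := by nlinarith
  have p3 : v ^ 3 < u ^ 3 := by nlinarith
  have p4 : v ^ 4 < u ^ 4 := by nlinarith
  have h0 : v ^ 5 < u ^ 5 := by nlinarith [mul_pos hv (sub_pos.2 p4), mul_pos (sub_pos.2 hvu) (pow_pos hu 4)]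
  have h1 : u * v ^ 5 < v * u ^ 5 := by
    nlinarith [mul_pos (mul_pos hu hv) (sub_pos.2 p4)]
  have h2 : u ^ 2 * v ^ 5 < v ^ 2 * u ^ 5 := by
    nlinarith [mul_pos (pow_pos (mul_pos hu hv) 2) (sub_pos.2 p3)]
  have h3 : u ^ 3 * v ^ 5 < v ^ 3 * u ^ 5 := by
    nlinarith [mul_pos (pow_pos (mul_pos hu hv) 3) (sub_pos.2 p2)]
  have h4 : u ^ 4 * v ^ 5 < v ^ 4 * u ^ 5 := by
    nlinarith [mul_pos (pow_pos (mul_pos hu hv) 4) (sub_pos.2 hvu)]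
  simp only [pHY] at E
  nlinarith [h0, h1, h2, h3, h4]

theorem stmt_3 :
    -- the coefficient sequence of p(−Y) is (−a₅, a₄, a₃', a₂', a₁', a₀) with exactly one
    -- sign change: the leading coefficient is negative and all the others are positive
    ((-1601361472000000 : ℝ) < 0 ∧ (6760062816990000 : ℝ) > 0 ∧
      (6284181440066400 : ℝ) > 0 ∧ (3572696139179193 : ℝ) > 0 ∧
      (7126051666209372 : ℝ) > 0 ∧ (2258133778849572 : ℝ) > 0) ∧
    -- hence p has at most one negative real root
    {Y : ℝ | Y < 0 ∧ pHY Y = 0}.Subsingleton ∧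
    -- p(0) > 0
    pHY 0 > 0 ∧
    -- p(Y) → −∞ as Y → −∞
    Filter.Tendsto pHY Filter.atBot Filter.atBot ∧
    -- hence p has at least one negative real root
    (∃ Y : ℝ, Y < 0 ∧ pHY Y = 0) := by
  have hcont : Continuous pHY := by unfold pHY; continuity
  refine ⟨by norm_num, ?_, by norm_num [pHY], ?_, ?_⟩
  · intro Y1 h1 Y2 h2
    by_contra hne
    rcases lt_or_gt_of_ne hne with h | h
    · exact pHY_key (-Y1) (-Y2) (by linarith [h2.1]) (by linarith)
        (by simpa using h1.2) (by simpa using h2.2)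
    · exact pHY_key (-Y2) (-Y1) (by linarith [h1.1]) (by linarith)
        (by simpa using h2.2) (by simpa using h1.2)
  · have hev : pHY ≤ᶠ[Filter.atBot] id := by
      filter_upwards [Filter.eventually_le_atBot (-10 : ℝ)] with Y hY
      show pHY Y ≤ Y
      have h4 : (0:ℝ) ≤ Y ^ 4 := by positivity
      have h2 : (0:ℝ) ≤ Y ^ 2 := by positivity
      have hY5 : Y ^ 5 ≤ -10 * Y ^ 4 := by nlinarith
      have hY3 : Y ^ 3 ≤ -10 * Y ^ 2 := by nlinarith
      unfold pHY
      nlinarith [mul_nonneg h4 (by linarith : (0:ℝ) ≤ -(Y+10)), mul_nonneg h2 (by linarith : (0:ℝ) ≤ -(Y+10)), sq_nonneg Y, sq_nonneg (Y+10), mul_nonneg (mul_nonneg h2 h2) (by linarith : (0:ℝ) ≤ -(Y+10))]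
    exact Filter.tendsto_atBot_mono' _ hev Filter.tendsto_id
  · have hab : (-100 : ℝ) ≤ 0 := by norm_num
    have hneg : pHY (-100) < 0 := by norm_num [pHY]
    have hpos : (0:ℝ) < pHY 0 := by norm_num [pHY]
    have := intermediate_value_Icc hab hcont.continuousOn
    have h0 : (0:ℝ) ∈ Set.Icc (pHY (-100)) (pHY 0) := ⟨hneg.le, hpos.le⟩
    obtain ⟨Y, hYmem, hYeq⟩ := this h0
    refine ⟨Y, ?_, hYeq⟩
    rcases lt_or_eq_of_le hYmem.2 with h | h
    · exact h
    · exfalso; rw [h] at hYeq; linarith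
end

section
/- Let I and J be open real intervals and δ : I × J → ℝ a smooth function such that (i) for each b ∈ J, the function u ↦ δ(u,b) is real-analytic on I, (ii) there is a natural number N such that for each b ∈ J the function u ↦ δ(u,b) has at most N simple zeros (zeros u with δ(u,b)=0 and ∂δ/∂u(u,b) ≠ 0), and (iii) ∂δ/∂b(u,b) > 0 for all (u,b) ∈ I × J. Then for each b ∈ J, the function u ↦ δ(u,b) has at most N isolated zeros. -/
open Set MeasureTheory Filter

/-- 1D Sard: the image of a set on which a function has zero derivative (within the set)
is Lebesgue-null. -/
theorem sard1d {f : ℝ → ℝ} {s : Set ℝ} (hf : ∀ x ∈ s, HasDerivWithinAt f 0 s x) :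
    volume (f '' s) = 0 := by
  have h0 : (ContinuousLinearMap.smulRight (1 : ℝ →L[ℝ] ℝ) (0:ℝ)) = 0 := by
    ext
    simp
  have := addHaar_image_eq_zero_of_det_fderivWithin_eq_zero (μ := volume)
    (f' := fun _ => ContinuousLinearMap.smulRight (1 : ℝ →L[ℝ] ℝ) (0:ℝ))
    (fun x hx => (hf x hx).hasFDerivWithinAt) ?_
  · simpa using this
  · intro x _
    rw [h0]
    simp [ContinuousLinearMap.det]

set_option maxHeartbeats 1000000 in
theorem stmt_10 (I J : Set ℝ) (hI : ∃ a b : ℝ, I = Set.Ioo a b) (hJ : ∃ c d : ℝ, J = Set.Ioo c d)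
    (δ : ℝ → ℝ → ℝ)
    (hsmooth : ContDiffOn ℝ (⊤ : ℕ∞) (fun p : ℝ × ℝ => δ p.1 p.2) (I ×ˢ J))
    (hanal : ∀ b ∈ J, AnalyticOnNhd ℝ (fun u => δ u b) I)
    (N : ℕ)
    (hsimple : ∀ b ∈ J,
      {u | u ∈ I ∧ δ u b = 0 ∧ deriv (fun x => δ x b) u ≠ 0}.encard ≤ N)
    (hmono : ∀ u ∈ I, ∀ b ∈ J, 0 < deriv (fun t => δ u t) b) :
    ∀ b ∈ J,
      {u | u ∈ I ∧ δ u b = 0 ∧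
        ∃ ε > 0, ∀ v ∈ I, |v - u| < ε → δ v b = 0 → v = u}.encard ≤ N := by
  classical
  have hIopen : IsOpen I := by obtain ⟨a, b, rfl⟩ := hI; exact isOpen_Ioo
  have hJopen : IsOpen J := by obtain ⟨c, d, rfl⟩ := hJ; exact isOpen_Ioo
  have hJconv : Convex ℝ J := by obtain ⟨c, d, rfl⟩ := hJ; exact convex_Ioo c d
  have hPopen : IsOpen (I ×ˢ J) := hIopen.prod hJopen
  set F : ℝ × ℝ → ℝ := fun p => δ p.1 p.2 with hFdef
  have hdiff : ∀ p ∈ I ×ˢ J, HasFDerivAt F (fderiv ℝ F p) p := by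
    intro p hp
    exact ((hsmooth.differentiableOn (by simp) p hp).differentiableAt
      (hPopen.mem_nhds hp)).hasFDerivAt
  -- partial derivatives as values of the full derivative
  have hd1 : ∀ u ∈ I, ∀ b ∈ J,
      HasDerivAt (fun x => δ x b) (fderiv ℝ F (u, b) (1, 0)) u := by
    intro u hu b hb
    have hcurve : HasDerivAt (fun x : ℝ => ((x, b) : ℝ × ℝ)) ((1 : ℝ), (0 : ℝ)) u :=
      (hasDerivAt_id u).prodMk (hasDerivAt_const u b)
    have := (hdiff (u, b) ⟨hu, hb⟩).comp_hasDerivAt u hcurve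
    exact this
  have hd2 : ∀ u ∈ I, ∀ b ∈ J,
      HasDerivAt (fun t => δ u t) (fderiv ℝ F (u, b) (0, 1)) b := by
    intro u hu b hb
    have hcurve : HasDerivAt (fun t : ℝ => ((u, t) : ℝ × ℝ)) ((0 : ℝ), (1 : ℝ)) b :=
      (hasDerivAt_const b u).prodMk (hasDerivAt_id b)
    have := (hdiff (u, b) ⟨hu, hb⟩).comp_hasDerivAt b hcurve
    exact this
  have hm : ∀ u ∈ I, ∀ b ∈ J, 0 < fderiv ℝ F (u, b) (0, 1) := by
    intro u hu b hb
    have := (hd2 u hu b hb).deriv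
    rw [← this]
    exact hmono u hu b hb
  have hSM : ∀ u ∈ I, StrictMonoOn (fun t => δ u t) J := by
    intro u hu
    apply strictMonoOn_of_deriv_pos hJconv
    · intro b hb
      exact (hd2 u hu b hb).differentiableAt.continuousAt.continuousWithinAt
    · intro b hb
      rw [hJopen.interior_eq] at hb
      exact hmono u hu b hb
  have hc1 : ∀ b ∈ J, ContinuousOn (fun x => δ x b) I := by
    intro b hb u hu
    exact (hd1 u hu b hb).differentiableAt.continuousAt.continuousWithinAt
  intro b₀ hb₀
  by_contra hcon
  push_neg at hcon
  set Z := {u | u ∈ I ∧ δ u b₀ = 0 ∧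
    ∃ ε > 0, ∀ v ∈ I, |v - u| < ε → δ v b₀ = 0 → v = u} with hZdef
  obtain ⟨t, htZ, htcard⟩ : ∃ t ⊆ Z, t.encard = ((N + 1 : ℕ) : ℕ∞) := by
    have := Set.exists_subset_encard_eq (Order.add_one_le_of_lt hcon)
    simpa [Nat.cast_add] using this
  have htfin : t.Finite := Set.finite_of_encard_eq_coe htcard
  set T : Finset ℝ := htfin.toFinset with hTdef
  have hTcard : T.card = N + 1 := by
    have := htfin.encard_eq_coe_toFinset_card
    rw [htcard] at this
    exact_mod_cast this.symm
  have hTZ : ∀ x ∈ T, x ∈ Z := by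
    intro x hx
    exact htZ (htfin.mem_toFinset.1 hx)
  have hTI : ∀ x ∈ T, x ∈ I := fun x hx => (hTZ x hx).1
  have hT0 : ∀ x ∈ T, δ x b₀ = 0 := fun x hx => (hTZ x hx).2.1
  -- a radius working for every point of T
  have hper : ∀ x ∈ T, ∃ ρ, 0 < ρ ∧ Set.Icc (x - ρ) (x + ρ) ⊆ I ∧
      ∀ v, |v - x| ≤ ρ → v ≠ x → δ v b₀ ≠ 0 := by
    intro x hx
    obtain ⟨hxI, hx0, ε, hε, hiso⟩ := hTZ x hx
    obtain ⟨ρI, hρI, hball⟩ := Metric.isOpen_iff.1 hIopen x hxI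
    have hρpos : 0 < min (ε / 2) (ρI / 2) := by positivity
    have hsub : Set.Icc (x - min (ε / 2) (ρI / 2)) (x + min (ε / 2) (ρI / 2)) ⊆ I := by
      intro v hv
      apply hball
      rw [Metric.mem_ball, Real.dist_eq]
      have h1 : |v - x| ≤ min (ε / 2) (ρI / 2) :=
        abs_le.2 ⟨by linarith [hv.1], by linarith [hv.2]⟩
      have h2 : min (ε / 2) (ρI / 2) ≤ ρI / 2 := min_le_right _ _
      linarith
    refine ⟨min (ε / 2) (ρI / 2), hρpos, hsub, ?_⟩
    intro v hvr hvx h0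
    have hvI : v ∈ I := hsub ⟨by linarith [(abs_le.1 hvr).1], by linarith [(abs_le.1 hvr).2]⟩
    have hvε : |v - x| < ε := by
      have := hvr.trans (min_le_left (ε / 2) (ρI / 2))
      linarith
    exact hvx (hiso v hvI hvε h0)
  choose! ρfun hρ1 hρ2 hρ3 using hper
  have hTne : T.Nonempty := Finset.card_pos.1 (by omega)
  -- a uniform separation radius
  obtain ⟨rp, hrp, hrpair⟩ : ∃ rp, 0 < rp ∧ ∀ x ∈ T, ∀ y ∈ T, x ≠ y → 2 * rp < |x - y| := by
    set D : Finset ℝ := ((T ×ˢ T).filter fun p => p.1 ≠ p.2).image fun p => |p.1 - p.2|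
      with hDdef
    have hDpos : ∀ z ∈ D, 0 < z := by
      intro z hz
      obtain ⟨p, hp, rfl⟩ := Finset.mem_image.1 hz
      have := (Finset.mem_filter.1 hp).2
      exact abs_pos.2 (sub_ne_zero.2 this)
    by_cases hD : D.Nonempty
    · refine ⟨D.min' hD / 3, ?_, ?_⟩
      · have := hDpos _ (D.min'_mem hD); linarith
      · intro x hx y hy hxy
        have hmem : |x - y| ∈ D := Finset.mem_image.2
          ⟨(x, y), Finset.mem_filter.2 ⟨Finset.mem_product.2 ⟨hx, hy⟩, hxy⟩, rfl⟩
        have h1 := D.min'_le _ hmem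
        have h0 := hDpos _ (D.min'_mem hD)
        linarith
    · refine ⟨1, one_pos, ?_⟩
      intro x hx y hy hxy
      exact absurd ⟨|x - y|, Finset.mem_image.2
        ⟨(x, y), Finset.mem_filter.2 ⟨Finset.mem_product.2 ⟨hx, hy⟩, hxy⟩, rfl⟩⟩ hD
  have hRne : (T.image ρfun).Nonempty := hTne.image _
  set r : ℝ := min ((T.image ρfun).min' hRne) rp with hrdef
  have hrρ : ∀ x ∈ T, r ≤ ρfun x := by
    intro x hx
    exact le_trans (min_le_left _ _) (Finset.min'_le _ _ (Finset.mem_image_of_mem _ hx))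
  have hr0 : 0 < r := by
    rw [hrdef]
    apply lt_min _ hrp
    obtain ⟨x, hx, hxe⟩ := Finset.mem_image.1 ((T.image ρfun).min'_mem hRne)
    rw [← hxe]
    exact hρ1 x hx
  have hrI : ∀ x ∈ T, Set.Icc (x - r) (x + r) ⊆ I := by
    intro x hx
    exact subset_trans (Set.Icc_subset_Icc (by linarith [hrρ x hx]) (by linarith [hrρ x hx]))
      (hρ2 x hx)
  have hriso : ∀ x ∈ T, ∀ v, |v - x| ≤ r → v ≠ x → δ v b₀ ≠ 0 := by
    intro x hx v hv hvx
    exact hρ3 x hx v (hv.trans (hrρ x hx)) hvx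
  have hrdist : ∀ x ∈ T, ∀ y ∈ T, x ≠ y → 2 * r < |x - y| := by
    intro x hx y hy hxy
    have := hrpair x hx y hy hxy
    have : r ≤ rp := min_le_right _ _
    linarith [hrpair x hx y hy hxy]
  -- endpoints
  set ep : ℝ × Bool → ℝ := fun q => if q.2 then q.1 - r else q.1 + r with hepdef
  have hepabs : ∀ q : ℝ × Bool, |ep q - q.1| = r := by
    intro q
    rcases q with ⟨x, _ | _⟩ <;> simp [hepdef, abs_of_nonneg hr0.le, abs_of_nonpos, hr0.le]
  have hepne : ∀ q : ℝ × Bool, q.1 ∈ T → ep q ≠ q.1 := by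
    intro q hq h
    have := hepabs q
    rw [h] at this
    simp at this
    exact hr0.ne' this.symm
  have hepIcc : ∀ q : ℝ × Bool, ep q ∈ Set.Icc (q.1 - r) (q.1 + r) := by
    intro q
    have := abs_le.1 (le_of_eq (hepabs q))
    exact ⟨by linarith [this.1], by linarith [this.2]⟩
  have hepI : ∀ q : ℝ × Bool, q.1 ∈ T → ep q ∈ I := fun q hq => hrI q.1 hq (hepIcc q)
  have hep0 : ∀ q : ℝ × Bool, q.1 ∈ T → δ (ep q) b₀ ≠ 0 := by
    intro q hq
    exact hriso q.1 hq (ep q) (le_of_eq (hepabs q)) (hepne q hq)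
  -- sign persistence near b₀ at all endpoints
  have hev : ∀ᶠ b in nhds b₀, b ∈ J ∧ ∀ q : ℝ × Bool, q.1 ∈ T →
      ((0 < δ (ep q) b₀ → 0 < δ (ep q) b) ∧ (δ (ep q) b₀ < 0 → δ (ep q) b < 0)) := by
    refine (hJopen.eventually_mem hb₀).and ?_
    have hkey : ∀ q : ℝ × Bool, q.1 ∈ T →
        (∀ᶠ b in nhds b₀, (0 < δ (ep q) b₀ → 0 < δ (ep q) b) ∧
          (δ (ep q) b₀ < 0 → δ (ep q) b < 0)) := by
      intro q hq
      have hcont : ContinuousAt (fun t => δ (ep q) t) b₀ :=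
        (hd2 (ep q) (hepI q hq) b₀ hb₀).differentiableAt.continuousAt
      rcases lt_or_gt_of_ne (hep0 q hq) with hneg | hpos
      · have : ∀ᶠ b in nhds b₀, δ (ep q) b < 0 := by
          have := hcont.preimage_mem_nhds (Iio_mem_nhds hneg)
          filter_upwards [this] with b hb using hb
        filter_upwards [this] with b hb
        exact ⟨fun h => absurd h (not_lt.2 hneg.le), fun _ => hb⟩
      · have : ∀ᶠ b in nhds b₀, 0 < δ (ep q) b := by
          have := hcont.preimage_mem_nhds (Ioi_mem_nhds hpos)
          filter_upwards [this] with b hb using hb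
        filter_upwards [this] with b hb
        exact ⟨fun _ => hb, fun h => absurd h (not_lt.2 hpos.le)⟩
    -- reduce to a finite set of conditions
    have : ∀ᶠ b in nhds b₀, ∀ x ∈ T, ∀ sb : Bool,
        ((0 < δ (ep (x, sb)) b₀ → 0 < δ (ep (x, sb)) b) ∧
          (δ (ep (x, sb)) b₀ < 0 → δ (ep (x, sb)) b < 0)) := by
      rw [Filter.eventually_all_finset]
      intro x hx
      have h1 := hkey (x, true) hx
      have h2 := hkey (x, false) hx
      filter_upwards [h1, h2] with b hb1 hb2 sb
      cases sb
      · exact hb2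
      · exact hb1
    filter_upwards [this] with b hb q hq
    exact hb q.1 hq q.2
  obtain ⟨η, hη, hηP⟩ := Metric.eventually_nhds_iff.1 hev
  have hBJ : ∀ b ∈ Set.Ioo (b₀ - η) (b₀ + η), b ∈ J := by
    intro b hb
    refine (hηP ?_).1
    rw [Real.dist_eq, abs_sub_lt_iff]
    exact ⟨by linarith [hb.2], by linarith [hb.1]⟩
  have hsign : ∀ b ∈ Set.Ioo (b₀ - η) (b₀ + η), ∀ q : ℝ × Bool, q.1 ∈ T →
      ((0 < δ (ep q) b₀ → 0 < δ (ep q) b) ∧ (δ (ep q) b₀ < 0 → δ (ep q) b < 0)) := by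
    intro b hb
    refine (hηP ?_).2
    rw [Real.dist_eq, abs_sub_lt_iff]
    exact ⟨by linarith [hb.2], by linarith [hb.1]⟩
  -- the implicit zero-level function β and the bad set s
  set Q : ℝ → ℝ → Prop := fun u b => b ∈ Set.Ioo (b₀ - η) (b₀ + η) ∧ δ u b = 0 with hQdef
  set β : ℝ → ℝ := fun u => if h : ∃ b, Q u b then Classical.choose h else b₀ with hβdef
  have hβspec : ∀ u : ℝ, (∃ b, Q u b) → Q u (β u) := by
    intro u h
    rw [hβdef]
    simp only [dif_pos h]
    exact Classical.choose_spec h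
  have huniq : ∀ u ∈ I, ∀ b b' : ℝ, Q u b → Q u b' → b = b' := by
    intro u hu b b' hb hb'
    rcases lt_trichotomy b b' with h | h | h
    · exfalso
      have := hSM u hu (hBJ b hb.1) (hBJ b' hb'.1) h
      simp only at this
      rw [hb.2, hb'.2] at this
      exact lt_irrefl 0 this
    · exact h
    · exfalso
      have := hSM u hu (hBJ b' hb'.1) (hBJ b hb.1) h
      simp only at this
      rw [hb.2, hb'.2] at this
      exact lt_irrefl 0 this
  have hβeq : ∀ u ∈ I, ∀ b : ℝ, Q u b → β u = b := by
    intro u hu b h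
    exact huniq u hu (β u) b (hβspec u ⟨b, h⟩) h
  set s : Set ℝ := {u : ℝ | (∃ x ∈ T, u ∈ Set.Icc (x - r) (x + r)) ∧
      ∃ b, Q u b ∧ deriv (fun x' => δ x' b) u = 0} with hsdef
  have hsI : ∀ u ∈ s, u ∈ I := by
    rintro u ⟨⟨x, hx, hmem⟩, -⟩
    exact hrI x hx hmem
  -- β has derivative zero on s
  have hβderiv : ∀ u₀ ∈ s, HasDerivWithinAt β 0 s u₀ := by
    intro u₀ hu₀
    have hu₀I : u₀ ∈ I := hsI u₀ hu₀
    obtain ⟨hloc, b, hQb, hD⟩ := hu₀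
    have hbJ : b ∈ J := hBJ b hQb.1
    have hβu₀ : β u₀ = b := hβeq u₀ hu₀I b hQb
    set L := fderiv ℝ F (u₀, b) with hLdef
    have hFd' : HasFDerivAt F L (u₀, b) := hdiff _ ⟨hu₀I, hbJ⟩
    have hp : L (1, 0) = 0 := ((hd1 u₀ hu₀I b hbJ).deriv).symm.trans hD
    have hm0 : 0 < L (0, 1) := hm u₀ hu₀I b hbJ
    have hLval : ∀ x y : ℝ, L (x, y) = y * L (0, 1) := by
      intro x y
      have hxy : ((x, y) : ℝ × ℝ) = x • ((1 : ℝ), (0 : ℝ)) + y • ((0 : ℝ), (1 : ℝ)) := by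
        simp [Prod.ext_iff]
      rw [hxy, map_add, L.map_smul, L.map_smul, hp, smul_eq_mul, smul_eq_mul]
      ring
    -- continuity of β within s at u₀
    have htends : Filter.Tendsto β (nhdsWithin u₀ s) (nhds b) := by
      rw [Metric.tendsto_nhdsWithin_nhds]
      intro ε hε
      obtain ⟨ρJ, hρJ, hballJ⟩ := Metric.isOpen_iff.1 hJopen b hbJ
      set ε' : ℝ := min (ε / 2) (ρJ / 2) with hε'def
      have hε'pos : 0 < ε' := by positivity
      have hmemJ : ∀ c : ℝ, |c - b| ≤ ε' → c ∈ J := by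
        intro c hc
        apply hballJ
        rw [Metric.mem_ball, Real.dist_eq]
        have : ε' ≤ ρJ / 2 := min_le_right _ _
        linarith [hc]
      have hplusJ : b + ε' ∈ J := hmemJ _ (by rw [add_sub_cancel_left]; rw [abs_of_pos hε'pos])
      have hminusJ : b - ε' ∈ J := by
        apply hmemJ
        rw [show b - ε' - b = -ε' by ring, abs_neg, abs_of_pos hε'pos]
      have hplus : 0 < δ u₀ (b + ε') := by
        have := hSM u₀ hu₀I hbJ hplusJ (by linarith)
        simp only at this
        rwa [hQb.2] at this
      have hminus : δ u₀ (b - ε') < 0 := by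
        have := hSM u₀ hu₀I hminusJ hbJ (by linarith)
        simp only at this
        rwa [hQb.2] at this
      have hev2 : ∀ᶠ v in nhds u₀, 0 < δ v (b + ε') ∧ δ v (b - ε') < 0 ∧ v ∈ I := by
        have hcp : ContinuousAt (fun v => δ v (b + ε')) u₀ :=
          (hd1 u₀ hu₀I _ hplusJ).differentiableAt.continuousAt
        have hcm : ContinuousAt (fun v => δ v (b - ε')) u₀ :=
          (hd1 u₀ hu₀I _ hminusJ).differentiableAt.continuousAt
        have h1 := hcp.preimage_mem_nhds (Ioi_mem_nhds hplus)
        have h2 := hcm.preimage_mem_nhds (Iio_mem_nhds hminus)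
        filter_upwards [h1, h2, hIopen.eventually_mem hu₀I] with v hv1 hv2 hv3
        exact ⟨hv1, hv2, hv3⟩
      obtain ⟨d, hd, hdP⟩ := Metric.eventually_nhds_iff.1 hev2
      refine ⟨d, hd, ?_⟩
      intro u hus hdist
      obtain ⟨h1, h2, h3⟩ := hdP hdist
      obtain ⟨-, bu, hQbu, -⟩ := hus
      have hβuQ : Q u (β u) := hβspec u ⟨bu, hQbu⟩
      have hβuJ : β u ∈ J := hBJ _ hβuQ.1
      have hlt1 : β u < b + ε' := by
        by_contra hcon2
        push_neg at hcon2
        have := (hSM u h3).monotoneOn hplusJ hβuJ hcon2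
        rw [hβuQ.2] at this
        exact absurd (lt_of_lt_of_le h1 this) (lt_irrefl 0)
      have hlt2 : b - ε' < β u := by
        by_contra hcon2
        push_neg at hcon2
        have := (hSM u h3).monotoneOn hβuJ hminusJ hcon2
        rw [hβuQ.2] at this
        exact absurd (lt_of_le_of_lt this h2) (lt_irrefl 0)
      rw [Real.dist_eq, abs_sub_lt_iff]
      have : ε' ≤ ε / 2 := min_le_left _ _
      constructor <;> linarith
    -- the little-o estimate
    rw [hasDerivWithinAt_iff_isLittleO, hβu₀]
    rw [Asymptotics.isLittleO_iff]
    intro c hc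
    set m := L (0, 1) with hmdef
    set c₁ : ℝ := min (m / 2) (c * m / 4) with hc₁def
    have hc₁pos : 0 < c₁ := by
      apply lt_min
      · linarith
      · have := mul_pos hc hm0
        linarith
    have hlo := (hFd'.isLittleO).def hc₁pos
    obtain ⟨d₁, hd₁, hP₁⟩ := Metric.eventually_nhds_iff.1 hlo
    have hev3 : ∀ᶠ u in nhdsWithin u₀ s, dist (β u) b < d₁ / 2 := by
      exact htends (Metric.ball_mem_nhds b (by linarith))
    have hev4 : ∀ᶠ u in nhdsWithin u₀ s, dist u u₀ < d₁ / 2 := by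
      apply eventually_nhdsWithin_of_eventually_nhds
      exact Metric.eventually_nhds_iff.2 ⟨d₁ / 2, by linarith, fun y hy => hy⟩
    filter_upwards [hev3, hev4, self_mem_nhdsWithin] with u h1 h2 h3
    obtain ⟨hloc', bu, hQbu, -⟩ := h3
    have hβuQ : Q u (β u) := hβspec u ⟨bu, hQbu⟩
    have hzero_u : δ u (β u) = 0 := hβuQ.2
    have hdistp : dist ((u, β u) : ℝ × ℝ) (u₀, b) < d₁ := by
      rw [Prod.dist_eq]
      exact max_lt (by linarith) (by linarith)
    have key := hP₁ hdistp
    rw [show F (u, β u) = 0 from hzero_u, show F (u₀, b) = 0 from hQb.2,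
      Prod.mk_sub_mk, hLval (u - u₀) (β u - b)] at key
    have hln : ‖((u - u₀, β u - b) : ℝ × ℝ)‖ ≤ |u - u₀| + |β u - b| := by
      rw [Prod.norm_def]
      simp only [Real.norm_eq_abs]
      exact max_le (le_add_of_nonneg_right (abs_nonneg _)) (le_add_of_nonneg_left (abs_nonneg _))
    have hkey2 : |β u - b| * m ≤ c₁ * (|u - u₀| + |β u - b|) := by
      calc |β u - b| * m = ‖(0 : ℝ) - 0 - (β u - b) * m‖ := by
            simp [Real.norm_eq_abs, abs_mul, abs_of_pos hm0]
        _ ≤ c₁ * ‖((u - u₀, β u - b) : ℝ × ℝ)‖ := key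
        _ ≤ c₁ * (|u - u₀| + |β u - b|) := mul_le_mul_of_nonneg_left hln hc₁pos.le
    have h5 : c₁ ≤ m / 2 := min_le_left _ _
    have h6 : c₁ ≤ c * m / 4 := min_le_right _ _
    have hgoal : |β u - b| ≤ c * |u - u₀| := by
      have hx0 : 0 ≤ |u - u₀| := abs_nonneg _
      have hd0 : 0 ≤ |β u - b| := abs_nonneg _
      have hm' : m ≠ 0 := hm0.ne'
      have p1 : c₁ * |u - u₀| ≤ c * m / 4 * |u - u₀| := mul_le_mul_of_nonneg_right h6 hx0
      have p2 : c₁ * |β u - b| ≤ m / 2 * |β u - b| := mul_le_mul_of_nonneg_right h5 hd0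
      have h8 : m / 2 * |β u - b| ≤ c * m / 4 * |u - u₀| := by linarith [hkey2]
      have h10 : (2 / m) * (m / 2 * |β u - b|) ≤ (2 / m) * (c * m / 4 * |u - u₀|) :=
        mul_le_mul_of_nonneg_left h8 (by positivity)
      have e1 : (2 / m) * (m / 2 * |β u - b|) = |β u - b| := by field_simp
      have e2 : (2 / m) * (c * m / 4 * |u - u₀|) = c / 2 * |u - u₀| := by
        field_simp
        ring
      rw [e1, e2] at h10
      have h11 : c / 2 * |u - u₀| ≤ c * |u - u₀| :=
        mul_le_mul_of_nonneg_right (by linarith) hx0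
      linarith
    simpa [Real.norm_eq_abs] using hgoal
  -- Sard: the bad parameter values are null
  have hnull : volume (β '' s) = 0 := sard1d hβderiv
  have hex : ∀ bl br : ℝ, bl < br → Set.Ioo bl br ⊆ Set.Ioo (b₀ - η) (b₀ + η) →
      ∃ b' ∈ Set.Ioo bl br, b' ∉ β '' s := by
    intro bl br hlt hsub
    by_contra hcon2
    push_neg at hcon2
    have hv : volume (Set.Ioo bl br) ≤ volume (β '' s) :=
      measure_mono (fun x hx => hcon2 x hx)
    rw [hnull, Real.volume_Ioo] at hv
    have hpos := ENNReal.ofReal_pos.2 (by linarith : (0 : ℝ) < br - bl)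
    exact absurd (le_antisymm hv (by simp)) hpos.ne'
  obtain ⟨bm, hbm, hbmg⟩ := hex (b₀ - η) b₀ (by linarith)
    (fun x hx => ⟨hx.1, by linarith [hx.2]⟩)
  obtain ⟨bp, hbp, hbpg⟩ := hex b₀ (b₀ + η) (by linarith)
    (fun x hx => ⟨by linarith [hx.1], hx.2⟩)
  have hbmB : bm ∈ Set.Ioo (b₀ - η) (b₀ + η) := ⟨hbm.1, by linarith [hbm.2]⟩
  have hbpB : bp ∈ Set.Ioo (b₀ - η) (b₀ + η) := ⟨by linarith [hbp.1], hbp.2⟩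
  -- good parameter values only have simple zeros on the union of intervals
  have hgood : ∀ b', b' ∈ Set.Ioo (b₀ - η) (b₀ + η) → b' ∉ β '' s →
      ∀ u, (∃ x ∈ T, u ∈ Set.Icc (x - r) (x + r)) → δ u b' = 0 →
        deriv (fun x' => δ x' b') u ≠ 0 := by
    intro b' hb'B hb'g u hloc h0 hder
    obtain ⟨x, hx, hmem⟩ := hloc
    have huI : u ∈ I := hrI x hx hmem
    have hQ : Q u b' := ⟨hb'B, h0⟩
    have hus : u ∈ s := ⟨⟨x, hx, hmem⟩, b', hQ, hder⟩
    exact hb'g ⟨u, hus, hβeq u huI b' hQ⟩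
  -- main counting lemma
  have hmain : ∀ b' ∈ Set.Ioo (b₀ - η) (b₀ + η), b' ∉ β '' s → ∀ σ : ℝ, σ ≠ 0 →
      ∀ G : Finset (ℝ × Bool), (∀ q ∈ G, q.1 ∈ T) →
      (∀ q ∈ G, 0 < σ * δ (ep q) b' ∧ σ * δ q.1 b' < 0) → (G.card : ℕ∞) ≤ (N : ℕ∞) := by
    intro b' hb'B hb'g σ hσ G hGT hGs
    have hb'J : b' ∈ J := hBJ b' hb'B
    have hIVT : ∀ q ∈ G, ∃ v, (|v - q.1| < r ∧ (q.2 = true → v < q.1) ∧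
        (q.2 = false → q.1 < v)) ∧ δ v b' = 0 := by
      intro q hq
      have hxT := hGT q hq
      have hcont : ContinuousOn (fun v => σ * δ v b') (Set.Icc (q.1 - r) (q.1 + r)) :=
        continuousOn_const.mul ((hc1 b' hb'J).mono (hrI q.1 hxT))
      obtain ⟨hse, hsx⟩ := hGs q hq
      rcases q with ⟨x, sb⟩
      simp only at hse hsx hcont hxT ⊢
      cases sb with
      | true =>
        have hle : x - r ≤ x := by linarith
        have hsub2 : Set.Icc (x - r) x ⊆ Set.Icc (x - r) (x + r) :=
          Set.Icc_subset_Icc le_rfl (by linarith)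
        have hiv := intermediate_value_Ioo' hle (hcont.mono hsub2)
        have h0mem : (0 : ℝ) ∈ Set.Ioo (σ * δ x b') (σ * δ (x - r) b') := by
          refine ⟨hsx, ?_⟩
          simpa [hepdef] using hse
        obtain ⟨v, hv, hv0⟩ := hiv h0mem
        refine ⟨v, ⟨?_, fun _ => hv.2, fun h => by simp at h⟩, ?_⟩
        · rw [abs_sub_lt_iff]
          constructor <;> [linarith [hv.2]; linarith [hv.1]]
        · simp only at hv0
          rcases mul_eq_zero.1 hv0 with h | h
          · exact absurd h hσ
          · exact h
      | false =>
        have hle : x ≤ x + r := by linarith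
        have hsub2 : Set.Icc x (x + r) ⊆ Set.Icc (x - r) (x + r) :=
          Set.Icc_subset_Icc (by linarith) le_rfl
        have hiv := intermediate_value_Ioo hle (hcont.mono hsub2)
        have h0mem : (0 : ℝ) ∈ Set.Ioo (σ * δ x b') (σ * δ (x + r) b') := by
          refine ⟨hsx, ?_⟩
          simpa [hepdef] using hse
        obtain ⟨v, hv, hv0⟩ := hiv h0mem
        refine ⟨v, ⟨?_, fun h => by simp at h, fun _ => hv.1⟩, ?_⟩
        · rw [abs_sub_lt_iff]
          constructor <;> [linarith [hv.2]; linarith [hv.1]]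
        · simp only at hv0
          rcases mul_eq_zero.1 hv0 with h | h
          · exact absurd h hσ
          · exact h
    choose! φ hφ1 hφ2 using hIVT
    have hinj : Set.InjOn φ ↑G := by
      intro q hq' q2 hq2' heq
      simp only [Finset.mem_coe] at hq' hq2'
      by_contra hne
      rcases eq_or_ne q.1 q2.1 with h1 | h1
      · have h2 : q.2 ≠ q2.2 := fun h2 => hne (Prod.ext h1 h2)
        obtain ⟨-, hbt, hbf⟩ := hφ1 q hq'
        obtain ⟨-, hbt2, hbf2⟩ := hφ1 q2 hq2'
        cases hs1 : q.2 <;> cases hs2 : q2.2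
        · exact h2 (hs1.trans hs2.symm)
        · have ha := hbf hs1
          have hb := hbt2 hs2
          rw [← heq, ← h1] at hb
          linarith
        · have ha := hbt hs1
          have hb := hbf2 hs2
          rw [← heq, ← h1] at hb
          linarith
        · exact h2 (hs1.trans hs2.symm)
      · have hd := hrdist q.1 (hGT q hq') q2.1 (hGT q2 hq2') h1
        have h3 := (hφ1 q hq').1
        have h4 := (hφ1 q2 hq2').1
        rw [heq] at h3
        have htri : |q.1 - q2.1| ≤ |φ q2 - q.1| + |φ q2 - q2.1| := by
          have h5 := abs_sub_le q.1 (φ q2) q2.1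
          rw [abs_sub_comm q.1 (φ q2)] at h5
          exact h5
        linarith
    have hcard : (G.image φ).card = G.card := Finset.card_image_of_injOn hinj
    have hsub : ↑(G.image φ) ⊆ {u | u ∈ I ∧ δ u b' = 0 ∧ deriv (fun x' => δ x' b') u ≠ 0} := by
      intro v hv
      simp only [Finset.coe_image, Set.mem_image, Finset.mem_coe] at hv
      obtain ⟨q, hq, rfl⟩ := hv
      have hxT := hGT q hq
      have h1 := (hφ1 q hq).1
      have h0 := hφ2 q hq
      have hicc : φ q ∈ Set.Icc (q.1 - r) (q.1 + r) := by
        have h2 := abs_le.1 h1.le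
        exact ⟨by linarith [h2.1], by linarith [h2.2]⟩
      exact ⟨hrI q.1 hxT hicc, h0, hgood b' hb'B hb'g (φ q) ⟨q.1, hxT, hicc⟩ h0⟩
    calc (G.card : ℕ∞) = ((G.image φ).card : ℕ∞) := by rw [hcard]
      _ = (↑(G.image φ) : Set ℝ).encard := (Set.encard_coe_eq_coe_finsetCard _).symm
      _ ≤ _ := Set.encard_mono hsub
      _ ≤ (N : ℕ∞) := hsimple b' hb'J
  -- final counting
  set Gpos : Finset (ℝ × Bool) := (T ×ˢ (Finset.univ : Finset Bool)).filter
      (fun q => 0 < δ (ep q) b₀) with hGposdef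
  set Gneg : Finset (ℝ × Bool) := (T ×ˢ (Finset.univ : Finset Bool)).filter
      (fun q => ¬ 0 < δ (ep q) b₀) with hGnegdef
  have hsum : Gpos.card + Gneg.card = 2 * (N + 1) := by
    rw [hGposdef, hGnegdef, Finset.card_filter_add_card_filter_not,
      Finset.card_product, hTcard, Finset.card_univ]
    simp [Fintype.card_bool]
    ring
  have hzm : ∀ x ∈ T, δ x bm < 0 := by
    intro x hx
    have h := hSM x (hTI x hx) (hBJ bm hbmB) hb₀ hbm.2
    simp only at h
    rwa [hT0 x hx] at h
  have hzp : ∀ x ∈ T, 0 < δ x bp := by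
    intro x hx
    have h := hSM x (hTI x hx) hb₀ (hBJ bp hbpB) hbp.1
    simp only at h
    rwa [hT0 x hx] at h
  have hcase : N + 1 ≤ Gpos.card ∨ N + 1 ≤ Gneg.card := by omega
  rcases hcase with hbig | hbig
  · have hres := hmain bm hbmB hbmg 1 one_ne_zero Gpos
      (fun q hq => (Finset.mem_product.1 (Finset.mem_filter.1 hq).1).1) ?_
    · have h2 : Gpos.card ≤ N := by exact_mod_cast hres
      omega
    · intro q hq
      have hxT := (Finset.mem_product.1 (Finset.mem_filter.1 hq).1).1
      have hsgn := (Finset.mem_filter.1 hq).2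
      refine ⟨?_, ?_⟩
      · rw [one_mul]
        exact (hsign bm hbmB q hxT).1 hsgn
      · rw [one_mul]
        exact hzm q.1 hxT
  · have hres := hmain bp hbpB hbpg (-1) (by norm_num) Gneg
      (fun q hq => (Finset.mem_product.1 (Finset.mem_filter.1 hq).1).1) ?_
    · have h2 : Gneg.card ≤ N := by exact_mod_cast hres
      omega
    · intro q hq
      have hxT := (Finset.mem_product.1 (Finset.mem_filter.1 hq).1).1
      have hsgn := (Finset.mem_filter.1 hq).2
      have hneq := hep0 q hxT
      have hneg : δ (ep q) b₀ < 0 := lt_of_le_of_ne (not_lt.1 hsgn) hneq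
      have hnegb : δ (ep q) bp < 0 := (hsign bp hbpB q hxT).2 hneg
      have hposx : 0 < δ q.1 bp := hzp q.1 hxT
      constructor <;> nlinarith
end
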